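/- With η₁(β) and η₂(β) defined as in the positivity analysis of g₁ and g₂, one has lim_{β→∞} η₁(β) = 0 and lim_{β→∞} η₂(β) = 0. -/
import Mathlib


open Real Filter

/-- The root η₁(β). -/
noncomputable def eta1 (α m β : ℝ) : ℝ :=
  4 * β * Real.Gamma (2 - α) / (2 - α) ^ 2 -
    2 * Real.sqrt 2 / ((2 - α) ^ 2 * Real.sqrt (m + 1)) *
      Real.sqrt (2 * β ^ 2 * (m + 1) * Real.Gamma (2 - α) ^ 2 - (2 - α) * Real.Gamma (3 - α))

/-- The root η₂(β). -/
noncomputable def eta2 (α m β : ℝ) : ℝ :=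
  2 * Real.sqrt 2 *
      Real.sqrt (Real.Gamma (2 - α) * (α ^ 2 + 2 * β ^ 2 * (m + 1) * Real.Gamma (2 - α))) /
    (α ^ 2 * Real.sqrt (m + 1)) - 4 * β * Real.Gamma (2 - α) / α ^ 2

private lemma sqrt_sub_sqrt_le_aux {x y : ℝ} (hy : 0 ≤ y) (hyx : y ≤ x) (hx : 0 < x) :
    Real.sqrt x - Real.sqrt y ≤ (x - y) / Real.sqrt x := by
  rw [le_div_iff₀ (Real.sqrt_pos.2 hx)]
  nlinarith [Real.sq_sqrt hx.le, Real.sq_sqrt hy, Real.sqrt_le_sqrt hyx,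
    Real.sqrt_nonneg y, Real.sqrt_nonneg x]

private lemma abs_sqrt_sub_sqrt_le {u v : ℝ} (hu : 0 ≤ u) (hv : 0 < v) :
    |Real.sqrt u - Real.sqrt v| ≤ |u - v| / Real.sqrt v := by
  have hsv : 0 < Real.sqrt v := Real.sqrt_pos.2 hv
  rcases le_total u v with h | h
  · rw [abs_of_nonpos (by simpa using Real.sqrt_le_sqrt h), abs_of_nonpos (by linarith)]
    have h1 := sqrt_sub_sqrt_le_aux hu h hv
    have h2 : -(u - v) / Real.sqrt v = (v - u) / Real.sqrt v := by ring
    linarith [h2]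
  · rw [abs_of_nonneg (by simpa using Real.sqrt_le_sqrt h), abs_of_nonneg (by linarith)]
    have h1 := sqrt_sub_sqrt_le_aux hv.le h (lt_of_lt_of_le hv h)
    calc Real.sqrt u - Real.sqrt v ≤ (u - v) / Real.sqrt u := h1
      _ ≤ (u - v) / Real.sqrt v :=
          div_le_div_of_nonneg_left (by linarith) hsv (Real.sqrt_le_sqrt h)

private lemma tendsto_sqrt_diff (C a b : ℝ) (ha : 0 < a) :
    Tendsto (fun β : ℝ => C * (Real.sqrt (a * β ^ 2 + b) - Real.sqrt (a * β ^ 2)))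
      atTop (nhds 0) := by
  have hsa : 0 < Real.sqrt a := Real.sqrt_pos.2 ha
  apply squeeze_zero_norm' (a := fun β : ℝ => (|C| * |b| / Real.sqrt a) / β)
  · filter_upwards [eventually_ge_atTop (max 1 (Real.sqrt (|b| / a)))] with β hβ
    have hβ1 : (1:ℝ) ≤ β := le_trans (le_max_left _ _) hβ
    have hβ0 : 0 < β := by linarith
    have hβs : Real.sqrt (|b| / a) ≤ β := le_trans (le_max_right _ _) hβ
    have hv : 0 < a * β ^ 2 := by positivity
    have hb : |b| ≤ a * β ^ 2 := by
      have h1 : |b| / a ≤ β ^ 2 := by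
        calc |b| / a = Real.sqrt (|b| / a) ^ 2 := (Real.sq_sqrt (by positivity)).symm
          _ ≤ β ^ 2 := by nlinarith [Real.sqrt_nonneg (|b| / a)]
      calc |b| = (|b| / a) * a := by field_simp
        _ ≤ β ^ 2 * a := by nlinarith
        _ = a * β ^ 2 := by ring
    have hu : 0 ≤ a * β ^ 2 + b := by
      have hb' : -|b| ≤ b := neg_abs_le b
      linarith
    have key := abs_sqrt_sub_sqrt_le hu hv
    have hsv : Real.sqrt (a * β ^ 2) = Real.sqrt a * β := by
      rw [Real.sqrt_mul ha.le, Real.sqrt_sq hβ0.le]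
    have habs : |a * β ^ 2 + b - a * β ^ 2| = |b| := by ring_nf
    rw [Real.norm_eq_abs, abs_mul]
    calc |C| * |Real.sqrt (a * β ^ 2 + b) - Real.sqrt (a * β ^ 2)|
        ≤ |C| * (|b| / (Real.sqrt a * β)) := by
          apply mul_le_mul_of_nonneg_left _ (abs_nonneg C)
          rw [← hsv]
          calc |Real.sqrt (a * β ^ 2 + b) - Real.sqrt (a * β ^ 2)|
              ≤ |a * β ^ 2 + b - a * β ^ 2| / Real.sqrt (a * β ^ 2) := key
            _ = |b| / Real.sqrt (a * β ^ 2) := by rw [habs]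
      _ = (|C| * |b| / Real.sqrt a) / β := by
          field_simp
  · exact Tendsto.div_atTop tendsto_const_nhds tendsto_id

/-- η₁(β) → 0 and η₂(β) → 0 as β → ∞. -/
theorem eta_tendsto_zero (α m : ℝ) (hα : 0 < α) (hα1 : α < 1) (hm : 1 < m) :
    Tendsto (fun β => eta1 α m β) atTop (nhds 0) ∧
      Tendsto (fun β => eta2 α m β) atTop (nhds 0) := by
  set G := Real.Gamma (2 - α) with hGdef
  set G3 := Real.Gamma (3 - α) with hG3def
  have hG : 0 < G := Real.Gamma_pos_of_pos (by linarith)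
  have hG3 : 0 < G3 := Real.Gamma_pos_of_pos (by linarith)
  have hm1 : (0:ℝ) < m + 1 := by linarith
  have hsm : 0 < Real.sqrt (m + 1) := Real.sqrt_pos.2 hm1
  have hsm2 : Real.sqrt (m + 1) * Real.sqrt (m + 1) = m + 1 := Real.mul_self_sqrt hm1.le
  have hs2 : Real.sqrt 2 * Real.sqrt 2 = 2 := Real.mul_self_sqrt (by norm_num)
  have h2α : (0:ℝ) < 2 - α := by linarith
  set a := 2 * (m + 1) * G ^ 2 with hadef
  have ha : 0 < a := by positivity
  have sqrtA : ∀ β : ℝ, 0 ≤ β →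
      Real.sqrt (a * β ^ 2) = Real.sqrt 2 * Real.sqrt (m + 1) * G * β := by
    intro β hβ
    rw [show a * β ^ 2 = (Real.sqrt 2 * Real.sqrt (m + 1) * G * β) ^ 2 by
      rw [hadef]
      linear_combination (-(Real.sqrt (m+1) * Real.sqrt (m+1)) * G^2 * β^2) * hs2
        + (-(2 * G^2 * β^2)) * hsm2]
    exact Real.sqrt_sq (by positivity)
  constructor
  · -- eta1
    set C1 := 2 * Real.sqrt 2 / ((2 - α) ^ 2 * Real.sqrt (m + 1)) with hC1def
    have hC1A : ∀ β : ℝ, C1 * (Real.sqrt 2 * Real.sqrt (m + 1) * G * β)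
        = 4 * β * G / (2 - α) ^ 2 := by
      intro β
      rw [hC1def, div_mul_eq_mul_div, div_eq_div_iff (by positivity) (by positivity)]
      linear_combination (2 * Real.sqrt (m+1) * G * β * (2-α)^2) * hs2
    have base := (tendsto_sqrt_diff C1 a (-((2 - α) * G3)) ha).neg
    rw [neg_zero] at base
    refine base.congr' ?_
    filter_upwards [eventually_ge_atTop (0:ℝ)] with β hβ
    have hA := sqrtA β hβ
    have harg : a * β ^ 2 + -((2 - α) * G3)
        = 2 * β ^ 2 * (m + 1) * G ^ 2 - (2 - α) * G3 := by rw [hadef]; ring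
    show -(C1 * (Real.sqrt (a * β ^ 2 + -((2 - α) * G3)) - Real.sqrt (a * β ^ 2)))
        = eta1 α m β
    rw [harg, hA]
    unfold eta1
    rw [← hGdef, ← hG3def, ← hC1def, mul_sub, neg_sub, hC1A]
  · -- eta2
    set C2 := 2 * Real.sqrt 2 / (α ^ 2 * Real.sqrt (m + 1)) with hC2def
    have hC2A : ∀ β : ℝ, C2 * (Real.sqrt 2 * Real.sqrt (m + 1) * G * β)
        = 4 * β * G / α ^ 2 := by
      intro β
      rw [hC2def, div_mul_eq_mul_div,
        div_eq_div_iff (mul_pos (pow_pos hα 2) hsm).ne' (pow_pos hα 2).ne']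
      linear_combination (2 * Real.sqrt (m+1) * G * β * α^2) * hs2
    have base := tendsto_sqrt_diff C2 a (α ^ 2 * G) ha
    refine base.congr' ?_
    filter_upwards [eventually_ge_atTop (0:ℝ)] with β hβ
    have hA := sqrtA β hβ
    have harg : a * β ^ 2 + α ^ 2 * G
        = G * (α ^ 2 + 2 * β ^ 2 * (m + 1) * G) := by rw [hadef]; ring
    show C2 * (Real.sqrt (a * β ^ 2 + α ^ 2 * G) - Real.sqrt (a * β ^ 2)) = eta2 α m β
    rw [harg, hA]
    unfold eta2
    rw [← hGdef, mul_sub, hC2A, hC2def]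
    ring
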